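/- arXiv:1707.00114 — 2 statements merged into one kernel-verified Lean document; each statement's English description precedes it below -/
import Mathlib

section
/- Fix M ≥ 2 and data r_{m,1}, r_{m,2} ∈ ℕ (m = 1,…,M) with sample means r̄₁ > 0 and r̄₂ > 0. Define, for λ > 0 and p₁, p₂ ∈ (0,1), the log-likelihood LL(λ,p₁,p₂) = −λ[1−(1−p₁)(1−p₂)] + r̄₁·ln(λp₁(1−p₂)) + r̄₂·ln(λp₂(1−p₁)) − (1/M)Σ_m ln(r_{m,1}!·r_{m,2}!) + Ψ((1−p₁)(1−p₂)λ), where Ψ(z) = (1/M)Σ_{m=1}^M ln[Σ_{l=0}^{min(r_{m,1},r_{m,2})} C(r_{m,1},l)·C(r_{m,2},l)·l!·z^{−l}] for z > 0. If (λ*, p₁*, p₂*) with λ* > 0 and p₁*, p₂* ∈ (0,1) satisfies the first-order conditions ∂LL/∂λ = ∂LL/∂p₁ = ∂LL/∂p₂ = 0, then p₁* = r̄₁/λ*, p₂* = r̄₂/λ*, and λ* satisfies the one-variable equation −(λ*/r̄₁ − 1)(λ*/r̄₂ − 1)·Ψ′((1 − r̄₁/λ*)(1 − r̄₂/λ*)·λ*)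 = 1. -/
/-!
Write `D = Ψ′((1 - p₁)(1 - p₂)λ)`. The three partial derivatives of `LL` are explicit and
linear in `D`, and the `p₂`-derivative is the `p₁`-derivative with the two samples swapped.
Adding `λp₁ · ∂LL/∂λ` to `p₁(1 - p₁) · ∂LL/∂p₁` eliminates `D` and leaves `r̄₁ - λp₁`, so
`r̄₁ = λp₁`, and likewise `r̄₂ = λp₂`. Substituted into `∂LL/∂λ = 0` this gives
`(1 - p₁)(1 - p₂) D = -p₁p₂`, which is the one-variable equation.
-/

open Finset

/-- The function `Ψ(z) = (1/M) Σ_m ln [ Σ_{l=0}^{min(r_{m,1},r_{m,2})}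
C(r_{m,1},l) C(r_{m,2},l) l! z^{−l} ]` appearing in the log-likelihood. -/
noncomputable def Psi (M : ℕ) (r1 r2 : Fin M → ℕ) (z : ℝ) : ℝ :=
  (∑ m : Fin M, Real.log
      (∑ l ∈ Finset.range (min (r1 m) (r2 m) + 1),
        (Nat.choose (r1 m) l : ℝ) * (Nat.choose (r2 m) l : ℝ) * (Nat.factorial l : ℝ) *
          z ^ (-(l : ℤ)))) / M

/-- The (normalized) log-likelihood `LL(λ, p₁, p₂)` of the data. -/
noncomputable def LL (M : ℕ) (r1 r2 : Fin M → ℕ) (lam p1 p2 : ℝ) : ℝ :=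
  -(lam * (1 - (1 - p1) * (1 - p2))) +
    ((∑ m : Fin M, (r1 m : ℝ)) / M) * Real.log (lam * p1 * (1 - p2)) +
    ((∑ m : Fin M, (r2 m : ℝ)) / M) * Real.log (lam * p2 * (1 - p1)) -
    (∑ m : Fin M, Real.log ((Nat.factorial (r1 m) : ℝ) * (Nat.factorial (r2 m) : ℝ))) / M +
    Psi M r1 r2 ((1 - p1) * (1 - p2) * lam)

theorem Psi_inner_sum_pos (r1 r2 : ℕ) {z : ℝ} (hz : 0 < z) :
    0 < ∑ l ∈ Finset.range (min r1 r2 + 1),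
        (Nat.choose r1 l : ℝ) * (Nat.choose r2 l : ℝ) * (Nat.factorial l : ℝ) *
          z ^ (-(l : ℤ)) :=
  Finset.sum_pos' (fun l _ => by positivity) ⟨0, by simp⟩

theorem differentiableAt_Psi (M : ℕ) (r1 r2 : Fin M → ℕ) {z : ℝ} (hz : 0 < z) :
    DifferentiableAt ℝ (Psi M r1 r2) z := by
  unfold Psi
  refine (DifferentiableAt.fun_sum fun m _ => DifferentiableAt.log ?_
    (Psi_inner_sum_pos (r1 m) (r2 m) hz).ne').div_const _
  exact DifferentiableAt.fun_sum fun l _ =>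
    (differentiableAt_const _).mul (differentiableAt_zpow.mpr (Or.inl hz.ne'))

theorem Psi_swap (M : ℕ) (r1 r2 : Fin M → ℕ) : Psi M r2 r1 = Psi M r1 r2 := by
  ext z
  simp only [Psi, min_comm (r2 _), mul_comm (Nat.choose (r2 _) _ : ℝ)]

theorem LL_swap (M : ℕ) (r1 r2 : Fin M → ℕ) (lam p1 p2 : ℝ) :
    LL M r2 r1 lam p2 p1 = LL M r1 r2 lam p1 p2 := by
  simp only [LL, Psi_swap, mul_comm (1 - p2), mul_comm (Nat.factorial (r2 _) : ℝ)]
  ring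

noncomputable def sampleMean (M : ℕ) (r : Fin M → ℕ) : ℝ := (∑ m : Fin M, (r m : ℝ)) / M

section Derivatives

variable (M : ℕ) (r1 r2 : Fin M → ℕ) {lam p1 p2 : ℝ}

theorem hasDerivAt_LL_lam (hlam : 0 < lam) (hp1 : p1 ∈ Set.Ioo (0 : ℝ) 1)
    (hp2 : p2 ∈ Set.Ioo (0 : ℝ) 1) :
    HasDerivAt (fun l => LL M r1 r2 l p1 p2)
      (-(1 - (1 - p1) * (1 - p2)) + sampleMean M r1 / lam + sampleMean M r2 / lam +
        (1 - p1) * (1 - p2) * deriv (Psi M r1 r2) ((1 - p1) * (1 - p2) * lam)) lam := by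
  obtain ⟨hp1, hq1⟩ := hp1
  obtain ⟨hp2, hq2⟩ := hp2
  rw [← sub_pos] at hq1 hq2
  have hz : 0 < (1 - p1) * (1 - p2) * lam := by positivity
  have hPsi := (differentiableAt_Psi M r1 r2 hz).hasDerivAt
  have hlog1 := (((hasDerivAt_id' lam).mul_const p1).mul_const (1 - p2)).log (by positivity)
  have hlog2 := (((hasDerivAt_id' lam).mul_const p2).mul_const (1 - p1)).log (by positivity)
  have hlin := ((hasDerivAt_id' lam).mul_const (1 - (1 - p1) * (1 - p2))).neg
  have hPsi' := hPsi.comp lam ((hasDerivAt_id' lam).const_mul ((1 - p1) * (1 - p2)))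
  refine HasDerivAt.congr_deriv
    ((((hlin.add (hlog1.const_mul (sampleMean M r1))).add
      (hlog2.const_mul (sampleMean M r2))).sub_const _).add hPsi') ?_
  field_simp

theorem hasDerivAt_LL_p1 (hlam : 0 < lam) (hp1 : p1 ∈ Set.Ioo (0 : ℝ) 1)
    (hp2 : p2 ∈ Set.Ioo (0 : ℝ) 1) :
    HasDerivAt (fun p => LL M r1 r2 lam p p2)
      (-(lam * (1 - p2)) + sampleMean M r1 / p1 - sampleMean M r2 / (1 - p1) -
        (1 - p2) * lam * deriv (Psi M r1 r2) ((1 - p1) * (1 - p2) * lam)) p1 := by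
  obtain ⟨hp1, hq1⟩ := hp1
  obtain ⟨hp2, hq2⟩ := hp2
  rw [← sub_pos] at hq1 hq2
  have hz : 0 < (1 - p1) * (1 - p2) * lam := by positivity
  have hPsi := (differentiableAt_Psi M r1 r2 hz).hasDerivAt
  have hq := (hasDerivAt_id' p1).const_sub 1
  have hlog1 := (((hasDerivAt_id' p1).const_mul lam).mul_const (1 - p2)).log (by positivity)
  have hlog2 := (hq.const_mul (lam * p2)).log (by positivity)
  have hlin := (((hq.mul_const (1 - p2)).const_sub 1).const_mul lam).neg
  have hPsi' := hPsi.comp p1 ((hq.mul_const (1 - p2)).mul_const lam)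
  refine HasDerivAt.congr_deriv
    ((((hlin.add (hlog1.const_mul (sampleMean M r1))).add
      (hlog2.const_mul (sampleMean M r2))).sub_const _).add hPsi') ?_
  field_simp
  ring

theorem hasDerivAt_LL_p2 (hlam : 0 < lam) (hp1 : p1 ∈ Set.Ioo (0 : ℝ) 1)
    (hp2 : p2 ∈ Set.Ioo (0 : ℝ) 1) :
    HasDerivAt (fun p => LL M r1 r2 lam p1 p)
      (-(lam * (1 - p1)) + sampleMean M r2 / p2 - sampleMean M r1 / (1 - p2) -
        (1 - p1) * lam * deriv (Psi M r1 r2) ((1 - p1) * (1 - p2) * lam)) p2 := by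
  convert hasDerivAt_LL_p1 M r2 r1 hlam hp2 hp1 using 1
  · exact funext fun p => LL_swap M r2 r1 lam p p1
  · rw [Psi_swap, mul_comm (1 - p2)]

end Derivatives

theorem mean_eq_of_foc {a b lam p1 p2 D : ℝ} (hlam : lam ≠ 0) (hp1 : p1 ≠ 0) (hq1 : 1 - p1 ≠ 0)
    (e1 : -(1 - (1 - p1) * (1 - p2)) + a / lam + b / lam + (1 - p1) * (1 - p2) * D = 0)
    (e2 : -(lam * (1 - p2)) + a / p1 - b / (1 - p1) - (1 - p2) * lam * D = 0) :
    a = lam * p1 := by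
  field_simp at e1 e2
  linear_combination p1 * e1 + e2

theorem foc_reduction (f : ℝ → ℝ) {a b lam p1 p2 : ℝ} (hlam : lam ≠ 0)
    (hp1 : p1 ≠ 0) (hq1 : 1 - p1 ≠ 0) (hp2 : p2 ≠ 0) (hq2 : 1 - p2 ≠ 0)
    (e1 : -(1 - (1 - p1) * (1 - p2)) + a / lam + b / lam +
      (1 - p1) * (1 - p2) * f ((1 - p1) * (1 - p2) * lam) = 0)
    (e2 : -(lam * (1 - p2)) + a / p1 - b / (1 - p1) -
      (1 - p2) * lam * f ((1 - p1) * (1 - p2) * lam) = 0)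
    (e3 : -(lam * (1 - p1)) + b / p2 - a / (1 - p2) -
      (1 - p1) * lam * f ((1 - p1) * (1 - p2) * lam) = 0) :
    p1 = a / lam ∧ p2 = b / lam ∧
      -((lam / a - 1) * (lam / b - 1)) * f ((1 - a / lam) * (1 - b / lam) * lam) = 1 := by
  have ha : a = lam * p1 := mean_eq_of_foc hlam hp1 hq1 e1 e2
  have hb : b = lam * p2 := mean_eq_of_foc hlam hp2 hq2 (by linear_combination e1) e3
  subst ha hb
  rw [mul_div_cancel_left₀ _ hlam, mul_div_cancel_left₀ _ hlam]
  refine ⟨rfl, rfl, ?_⟩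
  field_simp at e1 ⊢
  linear_combination -e1

theorem ml_first_order_reduction_general
    (M : ℕ) (r1 r2 : Fin M → ℕ)
    (rb1 rb2 : ℝ)
    (hrb1 : rb1 = (∑ m : Fin M, (r1 m : ℝ)) / M)
    (hrb2 : rb2 = (∑ m : Fin M, (r2 m : ℝ)) / M)
    (lamS p1S p2S : ℝ) (hlamS : 0 < lamS)
    (hp1S : p1S ∈ Set.Ioo (0 : ℝ) 1) (hp2S : p2S ∈ Set.Ioo (0 : ℝ) 1)
    (hFOC1 : deriv (fun l => LL M r1 r2 l p1S p2S) lamS = 0)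
    (hFOC2 : deriv (fun p => LL M r1 r2 lamS p p2S) p1S = 0)
    (hFOC3 : deriv (fun p => LL M r1 r2 lamS p1S p) p2S = 0) :
    p1S = rb1 / lamS ∧ p2S = rb2 / lamS ∧
      -((lamS / rb1 - 1) * (lamS / rb2 - 1)) *
        deriv (Psi M r1 r2) ((1 - rb1 / lamS) * (1 - rb2 / lamS) * lamS) = 1 := by
  subst hrb1 hrb2
  rw [(hasDerivAt_LL_lam M r1 r2 hlamS hp1S hp2S).deriv] at hFOC1
  rw [(hasDerivAt_LL_p1 M r1 r2 hlamS hp1S hp2S).deriv] at hFOC2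
  rw [(hasDerivAt_LL_p2 M r1 r2 hlamS hp1S hp2S).deriv] at hFOC3
  exact foc_reduction _ hlamS.ne' hp1S.1.ne' (sub_ne_zero.2 hp1S.2.ne')
    hp2S.1.ne' (sub_ne_zero.2 hp2S.2.ne') hFOC1 hFOC2 hFOC3

/-- reduction of the maximum-likelihood first-order conditions to a
one-variable equation.  If `(λ*, p₁*, p₂*)` with `λ* > 0`, `p₁*, p₂* ∈ (0,1)` satisfies
`∂LL/∂λ = ∂LL/∂p₁ = ∂LL/∂p₂ = 0`, then `p₁* = r̄₁/λ*`, `p₂* = r̄₂/λ*`, and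
`−(λ*/r̄₁ − 1)(λ*/r̄₂ − 1) Ψ′((1 − r̄₁/λ*)(1 − r̄₂/λ*)λ*) = 1`. -/
theorem ml_first_order_reduction
    (M : ℕ) (hM : 2 ≤ M) (r1 r2 : Fin M → ℕ)
    (rb1 rb2 : ℝ)
    (hrb1 : rb1 = (∑ m : Fin M, (r1 m : ℝ)) / M)
    (hrb2 : rb2 = (∑ m : Fin M, (r2 m : ℝ)) / M)
    (hrb1pos : 0 < rb1) (hrb2pos : 0 < rb2)
    (lamS p1S p2S : ℝ) (hlamS : 0 < lamS)
    (hp1S : p1S ∈ Set.Ioo (0 : ℝ) 1) (hp2S : p2S ∈ Set.Ioo (0 : ℝ) 1)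
    (hFOC1 : deriv (fun l => LL M r1 r2 l p1S p2S) lamS = 0)
    (hFOC2 : deriv (fun p => LL M r1 r2 lamS p p2S) p1S = 0)
    (hFOC3 : deriv (fun p => LL M r1 r2 lamS p1S p) p2S = 0) :
    p1S = rb1 / lamS ∧ p2S = rb2 / lamS ∧
      -((lamS / rb1 - 1) * (lamS / rb2 - 1)) *
        deriv (Psi M r1 r2) ((1 - rb1 / lamS) * (1 - rb2 / lamS) * lamS) = 1 :=
  ml_first_order_reduction_general M r1 r2 rb1 rb2 hrb1 hrb2 lamS p1S p2S hlamS hp1S hp2S hFOC1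
    hFOC2 hFOC3
end

section
/- Let a, b > 0 and let A, B be independent random variables with A ~ Poisson(a), B ~ Poisson(b). Then for every integer n ≥ 0, the conditional distribution of A given A + B = n is Binomial(n, a/(a+b)). Consequently, in the Capture–Recapture model with S_Y = Σ_{m=1}^M Y_m and S₂ = Σ_{m=1}^M X_{m,2}, for every n ≥ 1 one has E[S_Y/(S_Y + S₂) | S_Y + S₂ = n] = p₁, and hence E[p̂_{1,CR} | S_Y + S₂ ≥ 1] = p₁; symmetrically E[p̂_{2,CR} | S_Y + S₁ ≥ 1] = p₂ where S₁ = Σ_{m=1}^M X_{m,1}. -/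
open MeasureTheory ProbabilityTheory Finset
open scoped NNReal Nat unitInterval

/-!
Given `U + V = n`, independent `U ~ Po(u)` and `V ~ Po(v)` put the mass
`Po(u){k} Po(v){n - k} / Po(u + v){n} = C(n, k) pᵏ (1 - p)ⁿ⁻ᵏ`, `p = u / (u + v)`, on `U = k`.
The binomial mean `n p` then gives `U / (U + V)` the conditional mean `p` on every level set
`U + V = n ≥ 1`, hence on their disjoint union `U + V ≥ 1`. In the capture–recapture model the
totals `S_Y ~ Po(Mλp₁p₂)` and `S₂ ~ Po(Mλp₂(1 - p₁))` are sums of independent Poisson variables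
over disjoint index sets, so they are independent Poisson variables, and
`λp₁p₂ / (λp₁p₂ + λp₂(1 - p₁)) = p₁`.
-/

namespace ProbabilityTheory

lemma poissonMeasure_zero : poissonMeasure 0 = Measure.dirac 0 := by
  refine Measure.ext_of_singleton fun k => ?_
  rcases k with _ | k <;> simp [poissonMeasure_singleton]

lemma poisson_mul_poisson_eq_binomial_mul_poisson {u v : ℝ} (huv : u + v ≠ 0) {n k : ℕ}
    (hk : k ≤ n) :
    (Real.exp (-u) * u ^ k / k !) * (Real.exp (-v) * v ^ (n - k) / (n - k)!) =
      (Real.exp (-(u + v)) * (u + v) ^ n / n !) *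
        (n.choose k * (u / (u + v)) ^ k * (1 - u / (u + v)) ^ (n - k)) := by
  have hsplit : (u + v) ^ n = (u + v) ^ k * (u + v) ^ (n - k) := by
    rw [← pow_add, Nat.add_sub_cancel' hk]
  rw [one_sub_div huv, add_sub_cancel_left, div_pow, div_pow, neg_add, Real.exp_add, hsplit,
    Nat.cast_choose ℝ hk]
  field_simp

lemma integral_natCast_binomial (n : ℕ) (p : I) : ∫ k, (k : ℝ) ∂binomial n p = n * p := by
  have h := congrArg (Polynomial.eval (p : ℝ)) (bernsteinPolynomial.sum_smul ℝ n)
  simp only [Polynomial.eval_finsetSum, bernsteinPolynomial,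
    Polynomial.eval_mul, Polynomial.eval_pow, Polynomial.eval_sub, Polynomial.eval_one,
    Polynomial.eval_X, Polynomial.eval_natCast, nsmul_eq_mul] at h
  rw [integral_binomial, ← Nat.range_succ_eq_Iic, ← h]
  exact sum_congr rfl fun k _ => by rw [smul_eq_mul]; ring

variable {Ω : Type*} [MeasurableSpace Ω] {μ : Measure Ω}

lemma iIndepFun.hasLaw_finsetSum_poissonMeasure {ι : Type*} {X : ι → Ω → ℕ} {r : ι → ℝ≥0}
    (hind : iIndepFun X μ) (hmeas : ∀ i, Measurable (X i))
    (hX : ∀ i, HasLaw (X i) (poissonMeasure (r i)) μ) (s : Finset ι) :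
    HasLaw (fun ω => ∑ i ∈ s, X i ω) (poissonMeasure (∑ i ∈ s, r i)) μ := by
  classical
  have := hind.isProbabilityMeasure
  induction s using Finset.induction_on with
  | empty => simpa [poissonMeasure_zero] using hasLaw_dirac_of_ae_eq (P := μ) (x := 0) (by simp)
  | insert i s hi ih =>
    rw [← Finset.sum_fn] at ih
    convert (hind.indepFun_finsetSum_of_notMem hmeas hi).hasLaw_add_poissonMeasure ih (hX i)
      using 2
    · simp [sum_insert hi, add_comm]
    · rw [sum_insert hi, add_comm]

lemma iIndepFun.indepFun_finsetSum_finsetSum {ι β : Type*} [AddCommMonoid β] [MeasurableSpace β]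
    [MeasurableAdd₂ β] {f : ι → Ω → β} (h : iIndepFun f μ) (hf : ∀ i, Measurable (f i))
    {S T : Finset ι} (hST : Disjoint S T) :
    IndepFun (fun ω => ∑ i ∈ S, f i ω) (fun ω => ∑ i ∈ T, f i ω) μ := by
  have hsum (R : Finset ι) : (fun ω => ∑ i ∈ R, f i ω)
      = (fun x : R → β => ∑ j, x j) ∘ fun ω (j : R) => f j ω := by
    ext ω; exact (sum_coe_sort R fun i => f i ω).symm
  rw [hsum S, hsum T]
  exact (h.indepFun_finset S T hST hf).comp (by fun_prop) (by fun_prop)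

lemma iIndepFun.indepFun_columnSums {κ ι β : Type*} [AddCommMonoid β]
    [MeasurableSpace β] [MeasurableAdd₂ β] {f : κ × ι → Ω → β} (h : iIndepFun f μ)
    (hf : ∀ q, Measurable (f q)) (s : Finset κ) {i j : ι} (hij : i ≠ j) :
    IndepFun (fun ω => ∑ m ∈ s, f (m, i) ω) (fun ω => ∑ m ∈ s, f (m, j) ω) μ := by
  have hcolumn (i : ι) : (fun ω => ∑ m ∈ s, f (m, i) ω) = fun ω => ∑ q ∈ s ×ˢ {i}, f q ω := by
    ext ω; rw [sum_product]; simp only [sum_singleton]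
  rw [hcolumn i, hcolumn j]
  exact h.indepFun_finsetSum_finsetSum hf
    (disjoint_product.mpr (Or.inr (disjoint_singleton.mpr hij)))

lemma HasLaw.measure_preimage_singleton {α : Type*} [MeasurableSpace α]
    [MeasurableSingletonClass α] {X : Ω → α} {ν : Measure α} (hX : HasLaw X ν μ) (x : α) :
    μ (X ⁻¹' {x}) = ν {x} :=
  hX.measure_eq (measurableSet_singleton x)

lemma IndepFun.measure_add_eq_poissonMeasure {U V : Ω → ℕ} {u v : ℝ≥0} (hUV : IndepFun U V μ)
    (hU : HasLaw U (poissonMeasure u) μ) (hV : HasLaw V (poissonMeasure v) μ) (n : ℕ) :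
    μ {ω | U ω + V ω = n} = poissonMeasure (u + v) {n} :=
  (hUV.hasLaw_add_poissonMeasure hU hV).measure_preimage_singleton n

theorem IndepFun.hasLaw_cond_add_eq_binomial {U V : Ω → ℕ} {u v : ℝ≥0} {p : I}
    (hmU : Measurable U) (hUV : IndepFun U V μ)
    (hU : HasLaw U (poissonMeasure u) μ) (hV : HasLaw V (poissonMeasure v) μ)
    (huv : u + v ≠ 0) (hp : (p : ℝ) = u / (u + v)) (n : ℕ) :
    HasLaw U (binomial n p) μ[|{ω | U ω + V ω = n}] := by
  refine ⟨hmU.aemeasurable, Measure.ext_of_singleton fun k => ?_⟩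
  rw [Measure.map_apply hmU (measurableSet_singleton k),
    cond_apply' (hmU (measurableSet_singleton k)), binomial_singleton]
  rcases le_or_gt k n with hk | hk
  · have hinter : {ω | U ω + V ω = n} ∩ U ⁻¹' {k} = U ⁻¹' {k} ∩ V ⁻¹' {n - k} := by
      ext ω; simp only [Set.mem_inter_iff, Set.mem_ofPred_eq, Set.mem_preimage,
        Set.mem_singleton_iff]; omega
    have hpos : 0 < Real.exp (-(u + v : ℝ)) * (u + v : ℝ) ^ n / n ! := by
      have : (0 : ℝ) < u + v := by exact_mod_cast pos_of_ne_zero huv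
      positivity
    rw [hUV.measure_add_eq_poissonMeasure hU hV, hinter,
      hUV.measure_inter_preimage_eq_mul _ _ (measurableSet_singleton _) (measurableSet_singleton _),
      hU.measure_preimage_singleton, hV.measure_preimage_singleton, poissonMeasure_singleton,
      poissonMeasure_singleton, poissonMeasure_singleton, NNReal.coe_add,
      ← ENNReal.ofReal_mul (by positivity),
      poisson_mul_poisson_eq_binomial_mul_poisson (by exact_mod_cast huv) hk, ← hp,
      ENNReal.ofReal_mul hpos.le,
      ENNReal.inv_mul_cancel_left (ENNReal.ofReal_pos.mpr hpos).ne' ENNReal.ofReal_ne_top]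
  · have hinter : {ω | U ω + V ω = n} ∩ U ⁻¹' {k} = ∅ := by
      ext ω; simp only [Set.mem_inter_iff, Set.mem_ofPred_eq, Set.mem_preimage,
        Set.mem_singleton_iff, Set.mem_empty_iff_false, iff_false]; omega
    simp [hinter, Nat.choose_eq_zero_of_lt hk]

lemma integral_cond_eq_inv_mul_setIntegral (s : Set Ω) (f : Ω → ℝ) :
    ∫ ω, f ω ∂μ[|s] = (μ.real s)⁻¹ * ∫ ω in s, f ω ∂μ := by
  rw [cond, integral_smul_measure, ENNReal.toReal_inv, smul_eq_mul, measureReal_def]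

lemma integral_cond_iUnion {ι : Type*} [Countable ι] [IsFiniteMeasure μ] {S : ι → Set Ω}
    (hS : ∀ i, MeasurableSet (S i)) (hdisj : Pairwise (Function.onFun Disjoint S)) {f : Ω → ℝ}
    (hf : IntegrableOn f (⋃ i, S i) μ) {c : ℝ}
    (hc : ∀ i, μ (S i) ≠ 0 → ∫ ω, f ω ∂μ[|S i] = c) (hne : μ (⋃ i, S i) ≠ 0) :
    ∫ ω, f ω ∂μ[|⋃ i, S i] = c := by
  have hpiece (i : ι) : ∫ ω in S i, f ω ∂μ = ∫ _ in S i, c ∂μ := by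
    rw [setIntegral_const, smul_eq_mul]
    by_cases hi : μ (S i) = 0
    · rw [setIntegral_measure_zero _ hi, measureReal_def, hi, ENNReal.toReal_zero, zero_mul]
    · rw [← hc i hi, integral_cond_eq_inv_mul_setIntegral, ← mul_assoc,
        mul_inv_cancel₀ ((measureReal_ne_zero_iff).mpr hi), one_mul]
  rw [integral_cond_eq_inv_mul_setIntegral, integral_iUnion hS hdisj hf, tsum_congr hpiece,
    ← integral_iUnion hS hdisj (integrable_const c).integrableOn, setIntegral_const, smul_eq_mul,
    ← mul_assoc, inv_mul_cancel₀ ((measureReal_ne_zero_iff).mpr hne), one_mul]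

theorem IndepFun.integral_div_cond_add_eq {U V : Ω → ℕ} {u v : ℝ≥0}
    (hmU : Measurable U) (hmV : Measurable V) (hUV : IndepFun U V μ)
    (hU : HasLaw U (poissonMeasure u) μ) (hV : HasLaw V (poissonMeasure v) μ)
    (huv : u + v ≠ 0) {n : ℕ} (hn : n ≠ 0) :
    ∫ ω, (U ω : ℝ) / ((U ω + V ω : ℕ) : ℝ) ∂μ[|{ω | U ω + V ω = n}] = u / (u + v) := by
  let p : I := ⟨u / (u + v), unitInterval.div_mem u.2 (by positivity) (le_add_of_nonneg_right v.2)⟩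
  have hp : (p : ℝ) = u / (u + v) := rfl
  have hlaw := hUV.hasLaw_cond_add_eq_binomial hmU hU hV huv hp n
  have hs : MeasurableSet {ω | U ω + V ω = n} := (hmU.add hmV) (measurableSet_singleton n)
  calc ∫ ω, (U ω : ℝ) / ((U ω + V ω : ℕ) : ℝ) ∂μ[|{ω | U ω + V ω = n}]
      = ∫ ω, (fun k : ℕ => (k : ℝ) / n) (U ω) ∂μ[|{ω | U ω + V ω = n}] :=
        integral_congr_ae <| (ae_cond_mem hs).mono fun ω (hω : U ω + V ω = n) => by
          dsimp only; rw [hω]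
    _ = ∫ k, (k : ℝ) / n ∂binomial n p :=
        hlaw.integral_comp (f := fun k : ℕ => (k : ℝ) / n) .of_discrete
    _ = u / (u + v) := by
        rw [integral_div, integral_natCast_binomial, ← hp]
        field_simp

theorem IndepFun.integral_div_cond_one_le_add [IsFiniteMeasure μ] {U V : Ω → ℕ} {u v : ℝ≥0}
    (hmU : Measurable U) (hmV : Measurable V) (hUV : IndepFun U V μ)
    (hU : HasLaw U (poissonMeasure u) μ) (hV : HasLaw V (poissonMeasure v) μ)
    (huv : u + v ≠ 0) :
    ∫ ω, (U ω : ℝ) / ((U ω + V ω : ℕ) : ℝ) ∂μ[|{ω | 1 ≤ U ω + V ω}] = u / (u + v) := by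
  have hone : μ {ω | U ω + V ω = 1} ≠ 0 := by
    rw [hUV.measure_add_eq_poissonMeasure hU hV]
    exact (measureReal_ne_zero_iff).mp
      (poissonMeasure_real_singleton_pos 1 (pos_of_ne_zero huv)).ne'
  have hunion : {ω | 1 ≤ U ω + V ω} = ⋃ n : ℕ, {ω | U ω + V ω = n + 1} := by
    ext ω; simp only [Set.mem_ofPred_eq, Set.mem_iUnion]
    exact ⟨fun h => ⟨U ω + V ω - 1, by omega⟩, fun ⟨n, hn⟩ => by omega⟩
  have hbound (ω : Ω) : ‖(U ω : ℝ) / ((U ω + V ω : ℕ) : ℝ)‖ ≤ 1 := by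
    rw [Real.norm_of_nonneg (by positivity), Nat.cast_add]
    exact div_le_one_of_le₀ (le_add_of_nonneg_right (Nat.cast_nonneg _)) (by positivity)
  have hint : Integrable (fun ω => (U ω : ℝ) / ((U ω + V ω : ℕ) : ℝ)) μ :=
    (integrable_const 1).mono' (by fun_prop : Measurable _).aestronglyMeasurable
      (ae_of_all _ hbound)
  have hdisj : Pairwise (Function.onFun Disjoint fun n : ℕ => {ω | U ω + V ω = n + 1}) :=
    fun m n hmn => Set.disjoint_left.mpr fun ω hm hn => hmn (by simp_all)
  rw [hunion]
  exact integral_cond_iUnion (fun n => (hmU.add hmV) (measurableSet_singleton _)) hdisj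
    hint.integrableOn (fun n _ => hUV.integral_div_cond_add_eq hmU hmV hU hV huv n.succ_ne_zero)
    fun h => hone <|
      measure_mono_null (Set.subset_iUnion (fun n : ℕ => {ω | U ω + V ω = n + 1}) 0) h

theorem iIndepFun.integral_div_cond_columnSums {κ ι : Type*}
    {f : κ × ι → Ω → ℕ} (h : iIndepFun f μ) (hf : ∀ q, Measurable (f q)) {i j : ι} (hij : i ≠ j)
    {r s : ℝ≥0} (hi : ∀ m, HasLaw (f (m, i)) (poissonMeasure r) μ)
    (hj : ∀ m, HasLaw (f (m, j)) (poissonMeasure s) μ) (hrs : r + s ≠ 0) {t : Finset κ}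
    (ht : t.Nonempty) :
    (∀ n ≠ 0, ∫ ω, ((∑ m ∈ t, f (m, i) ω : ℕ) : ℝ) /
        ((∑ m ∈ t, f (m, i) ω + ∑ m ∈ t, f (m, j) ω : ℕ) : ℝ)
        ∂μ[|{ω | ∑ m ∈ t, f (m, i) ω + ∑ m ∈ t, f (m, j) ω = n}] = r / (r + s)) ∧
    ∫ ω, ((∑ m ∈ t, f (m, i) ω : ℕ) : ℝ) / ((∑ m ∈ t, f (m, i) ω + ∑ m ∈ t, f (m, j) ω : ℕ) : ℝ)
        ∂μ[|{ω | 1 ≤ ∑ m ∈ t, f (m, i) ω + ∑ m ∈ t, f (m, j) ω}] = r / (r + s) := by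
  have := h.isProbabilityMeasure
  have hlaw (k : ι) {q : ℝ≥0} (hk : ∀ m, HasLaw (f (m, k)) (poissonMeasure q) μ) :
      HasLaw (fun ω => ∑ m ∈ t, f (m, k) ω) (poissonMeasure (#t * q)) μ := by
    simpa using (h.precomp (Prod.mk_left_injective k)).hasLaw_finsetSum_poissonMeasure
      (fun m => hf (m, k)) hk t
  have hmeas (k : ι) : Measurable fun ω => ∑ m ∈ t, f (m, k) ω :=
    Finset.measurable_sum _ fun m _ => hf (m, k)
  have hcard : (#t : ℝ≥0) ≠ 0 := by simpa using ht.card_pos.ne'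
  have hne : #t * r + #t * s ≠ 0 := by
    rw [← mul_add]
    exact mul_ne_zero hcard hrs
  have hratio : ((#t * r : ℝ≥0) : ℝ) / ((#t * r : ℝ≥0) + (#t * s : ℝ≥0)) = r / (r + s) := by
    push_cast
    rw [← mul_add, mul_div_mul_left _ _ (by exact_mod_cast hcard)]
  have hind := h.indepFun_columnSums hf t hij
  exact ⟨fun n hn => (hind.integral_div_cond_add_eq (hmeas i) (hmeas j) (hlaw i hi) (hlaw j hj)
      hne hn).trans hratio,
    (hind.integral_div_cond_one_le_add (hmeas i) (hmeas j) (hlaw i hi) (hlaw j hj) hne).trans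
      hratio⟩

end ProbabilityTheory

theorem poisson_conditional_binomial_and_CR_unbiased_general
    {Ω : Type*} [MeasurableSpace Ω] (μ : Measure Ω)
    -- the two independent Poisson variables
    (a b : ℝ) (ha : 0 < a) (hb : 0 < b)
    (A B : Ω → ℕ) (hmA : Measurable A) (hmB : Measurable B)
    (hAB : IndepFun A B μ)
    (hA : μ.map A = poissonMeasure a.toNNReal)
    (hB : μ.map B = poissonMeasure b.toNNReal)
    -- the Capture–Recapture model
    (lam p1 p2 : ℝ) (hlam : 0 < lam)
    (hp1 : p1 ∈ Set.Ioo (0 : ℝ) 1) (hp2 : p2 ∈ Set.Ioo (0 : ℝ) 1)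
    (M : ℕ) (hM : 2 ≤ M)
    (X1 X2 Y : ℕ → Ω → ℕ)
    (hmX1 : ∀ m, Measurable (X1 m)) (hmX2 : ∀ m, Measurable (X2 m))
    (hmY : ∀ m, Measurable (Y m))
    (hindep : iIndepFun
      (fun (q : ℕ × Fin 3) => ![X1 q.1, X2 q.1, Y q.1] q.2) μ)
    (hX1 : ∀ m, μ.map (X1 m) = poissonMeasure (lam * p1 * (1 - p2)).toNNReal)
    (hX2 : ∀ m, μ.map (X2 m) = poissonMeasure (lam * p2 * (1 - p1)).toNNReal)
    (hY : ∀ m, μ.map (Y m) = poissonMeasure (lam * p1 * p2).toNNReal) :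
    -- conditional-binomial claim
    (∀ n k : ℕ, k ≤ n →
      μ[|{ω | A ω + B ω = n}] {ω | A ω = k} =
        ENNReal.ofReal ((Nat.choose n k : ℝ) * (a / (a + b)) ^ k *
          (1 - a / (a + b)) ^ (n - k))) ∧
    -- E[S_Y/(S_Y+S₂) | S_Y+S₂ = n] = p₁ for every n ≥ 1
    (∀ n : ℕ, 1 ≤ n →
      (∫ ω, ((∑ m ∈ Finset.range M, Y m ω : ℕ) : ℝ) /
          (((∑ m ∈ Finset.range M, Y m ω) + (∑ m ∈ Finset.range M, X2 m ω) : ℕ) : ℝ)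
        ∂(μ[|{ω | (∑ m ∈ Finset.range M, Y m ω) + (∑ m ∈ Finset.range M, X2 m ω) = n}]))
        = p1) ∧
    -- E[p̂₁,CR | S_Y+S₂ ≥ 1] = p₁
    ((∫ ω, ((∑ m ∈ Finset.range M, Y m ω : ℕ) : ℝ) /
          (((∑ m ∈ Finset.range M, Y m ω) + (∑ m ∈ Finset.range M, X2 m ω) : ℕ) : ℝ)
        ∂(μ[|{ω | 1 ≤ (∑ m ∈ Finset.range M, Y m ω) + (∑ m ∈ Finset.range M, X2 m ω)}]))
        = p1) ∧
    -- E[p̂₂,CR | S_Y+S₁ ≥ 1] = p₂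
    ((∫ ω, ((∑ m ∈ Finset.range M, Y m ω : ℕ) : ℝ) /
          (((∑ m ∈ Finset.range M, Y m ω) + (∑ m ∈ Finset.range M, X1 m ω) : ℕ) : ℝ)
        ∂(μ[|{ω | 1 ≤ (∑ m ∈ Finset.range M, Y m ω) + (∑ m ∈ Finset.range M, X1 m ω)}]))
        = p2) := by
  obtain ⟨hp1₀, hp1₁⟩ := hp1
  obtain ⟨hp2₀, hp2₁⟩ := hp2
  set g : ℕ × Fin 3 → Ω → ℕ := fun q => ![X1 q.1, X2 q.1, Y q.1] q.2
  have hmg (q : ℕ × Fin 3) : Measurable (g q) := by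
    obtain ⟨m, j⟩ := q
    fin_cases j
    exacts [hmX1 m, hmX2 m, hmY m]
  have hlaw (j : Fin 3) {r : ℝ} (hr : ∀ m, μ.map (g (m, j)) = poissonMeasure r.toNNReal) (m : ℕ) :
      HasLaw (g (m, j)) (poissonMeasure r.toNNReal) μ :=
    ⟨(hmg (m, j)).aemeasurable, hr m⟩
  have hrates {r s : ℝ} (hr : 0 < r) (hs : 0 < s) :
      r.toNNReal + s.toNNReal ≠ 0 ∧ (r.toNNReal : ℝ) / (r.toNNReal + s.toNNReal) = r / (r + s) :=
    ⟨(add_pos (Real.toNNReal_pos.mpr hr) (Real.toNNReal_pos.mpr hs)).ne',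
      by rw [Real.coe_toNNReal _ hr.le, Real.coe_toNNReal _ hs.le]⟩
  have hM : (range M).Nonempty := nonempty_range_iff.mpr (by omega)
  have hY₀ : 0 < lam * p1 * p2 := by positivity
  have hX1₀ : 0 < lam * p1 * (1 - p2) := mul_pos (by positivity) (by linarith)
  have hX2₀ : 0 < lam * p2 * (1 - p1) := mul_pos (by positivity) (by linarith)
  obtain ⟨hlevel, hpos₁⟩ := hindep.integral_div_cond_columnSums hmg (by decide : (2 : Fin 3) ≠ 1)
    (hlaw 2 hY) (hlaw 1 hX2) (hrates hY₀ hX2₀).1 hM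
  obtain ⟨-, hpos₂⟩ := hindep.integral_div_cond_columnSums hmg (by decide : (2 : Fin 3) ≠ 0)
    (hlaw 2 hY) (hlaw 0 hX1) (hrates hY₀ hX1₀).1 hM
  rw [(hrates hY₀ hX2₀).2] at hlevel hpos₁
  rw [(hrates hY₀ hX1₀).2] at hpos₂
  refine ⟨fun n k _ => ?_, fun n hn => (hlevel n (by omega)).trans ?_, hpos₁.trans ?_,
    hpos₂.trans ?_⟩
  · let p : I := ⟨a / (a + b), unitInterval.div_mem ha.le (by positivity) (by linarith)⟩
    have hbinom := hAB.hasLaw_cond_add_eq_binomial hmA ⟨hmA.aemeasurable, hA⟩ ⟨hmB.aemeasurable, hB⟩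
      (hrates ha hb).1 (p := p) (hrates ha hb).2.symm n
    exact (hbinom.measure_preimage_singleton k).trans (binomial_singleton n k p)
  all_goals
    field_simp
    ring

/-- if `A ~ Poisson(a)` and `B ~ Poisson(b)` are independent, then the
conditional distribution of `A` given `A + B = n` is `Binomial(n, a/(a+b))`;
consequently, in the Capture–Recapture model, with `S_Y = Σ_m Y_m`, `S₂ = Σ_m X_{m,2}`,
`S₁ = Σ_m X_{m,1}`, one has `E[S_Y/(S_Y+S₂) | S_Y+S₂ = n] = p₁` for every `n ≥ 1`,
`E[p̂₁,CR | S_Y+S₂ ≥ 1] = p₁`, and symmetrically `E[p̂₂,CR | S_Y+S₁ ≥ 1] = p₂`. -/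
theorem poisson_conditional_binomial_and_CR_unbiased
    {Ω : Type*} [MeasurableSpace Ω] (μ : Measure Ω) [IsProbabilityMeasure μ]
    -- the two independent Poisson variables
    (a b : ℝ) (ha : 0 < a) (hb : 0 < b)
    (A B : Ω → ℕ) (hmA : Measurable A) (hmB : Measurable B)
    (hAB : IndepFun A B μ)
    (hA : μ.map A = poissonMeasure a.toNNReal)
    (hB : μ.map B = poissonMeasure b.toNNReal)
    -- the Capture–Recapture model
    (lam p1 p2 : ℝ) (hlam : 0 < lam)
    (hp1 : p1 ∈ Set.Ioo (0 : ℝ) 1) (hp2 : p2 ∈ Set.Ioo (0 : ℝ) 1)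
    (M : ℕ) (hM : 2 ≤ M)
    (X1 X2 Y : ℕ → Ω → ℕ)
    (hmX1 : ∀ m, Measurable (X1 m)) (hmX2 : ∀ m, Measurable (X2 m))
    (hmY : ∀ m, Measurable (Y m))
    (hindep : iIndepFun
      (fun (q : ℕ × Fin 3) => ![X1 q.1, X2 q.1, Y q.1] q.2) μ)
    (hX1 : ∀ m, μ.map (X1 m) = poissonMeasure (lam * p1 * (1 - p2)).toNNReal)
    (hX2 : ∀ m, μ.map (X2 m) = poissonMeasure (lam * p2 * (1 - p1)).toNNReal)
    (hY : ∀ m, μ.map (Y m) = poissonMeasure (lam * p1 * p2).toNNReal) :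
    -- conditional-binomial claim
    (∀ n k : ℕ, k ≤ n →
      μ[|{ω | A ω + B ω = n}] {ω | A ω = k} =
        ENNReal.ofReal ((Nat.choose n k : ℝ) * (a / (a + b)) ^ k *
          (1 - a / (a + b)) ^ (n - k))) ∧
    -- E[S_Y/(S_Y+S₂) | S_Y+S₂ = n] = p₁ for every n ≥ 1
    (∀ n : ℕ, 1 ≤ n →
      (∫ ω, ((∑ m ∈ Finset.range M, Y m ω : ℕ) : ℝ) /
          (((∑ m ∈ Finset.range M, Y m ω) + (∑ m ∈ Finset.range M, X2 m ω) : ℕ) : ℝ)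
        ∂(μ[|{ω | (∑ m ∈ Finset.range M, Y m ω) + (∑ m ∈ Finset.range M, X2 m ω) = n}]))
        = p1) ∧
    -- E[p̂₁,CR | S_Y+S₂ ≥ 1] = p₁
    ((∫ ω, ((∑ m ∈ Finset.range M, Y m ω : ℕ) : ℝ) /
          (((∑ m ∈ Finset.range M, Y m ω) + (∑ m ∈ Finset.range M, X2 m ω) : ℕ) : ℝ)
        ∂(μ[|{ω | 1 ≤ (∑ m ∈ Finset.range M, Y m ω) + (∑ m ∈ Finset.range M, X2 m ω)}]))
        = p1) ∧
    -- E[p̂₂,CR | S_Y+S₁ ≥ 1] = p₂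
    ((∫ ω, ((∑ m ∈ Finset.range M, Y m ω : ℕ) : ℝ) /
          (((∑ m ∈ Finset.range M, Y m ω) + (∑ m ∈ Finset.range M, X1 m ω) : ℕ) : ℝ)
        ∂(μ[|{ω | 1 ≤ (∑ m ∈ Finset.range M, Y m ω) + (∑ m ∈ Finset.range M, X1 m ω)}]))
        = p2) :=
  poisson_conditional_binomial_and_CR_unbiased_general μ a b ha hb A B hmA hmB hAB hA hB lam p1 p2
    hlam hp1 hp2 M hM X1 X2 Y hmX1 hmX2 hmY hindep hX1 hX2 hY
end
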